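/- Let X be a type, L : Set (FreeMonoid X), and let N_L be the minimal automaton of L: states Q_L = { u⁻¹L | u : FreeMonoid X }, initial state L, transitions K ↦ a⁻¹K for a : X, accepting states { K ∈ Q_L | [] ∈ K } (quotients containing the empty word). Let M be any deterministic automaton with states Q, initial state s, transitions step, accepting set F, which accepts L and is reachable (every state is of the form evalFrom s w for some word w). Then there exists a unique function h : Q → Q_L such that h(s) = L, h(step q a) = a⁻¹(h q) for all q and a, and q ∈ F ↔ [] ∈ h q; moreover h is surjective. -/

import Mathlib

/-!
Send a state `q` to the language `M.acceptsFrom q` it accepts. A transition by `a` turns this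
language into its left quotient by `a`, and the start state goes to `L`, so reachability makes
every such language a left quotient of `L`, and every left quotient `u⁻¹L` is hit by the state
reached on `u`. Conversely, any map preserving the start state and the transitions sends the
state reached on `u` to `u⁻¹L`, so it agrees with this one on the reachable states, i.e.
everywhere.
-/

namespace FreeMonoid

variable {α : Type*}

def leftQuotient (u : FreeMonoid α) (K : Set (FreeMonoid α)) : Set (FreeMonoid α) :=
  {w | u * w ∈ K}

theorem leftQuotient_one (K : Set (FreeMonoid α)) : leftQuotient 1 K = K := by
  simp [leftQuotient]

theorem leftQuotient_mul (u v : FreeMonoid α) (K : Set (FreeMonoid α)) :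
    leftQuotient (u * v) K = leftQuotient v (leftQuotient u K) := by
  simp [leftQuotient, mul_assoc]

end FreeMonoid

namespace DFA

open FreeMonoid

variable {α σ : Type*} (M : DFA α σ)

theorem evalFrom_toList_mul (q : σ) (u v : FreeMonoid α) :
    M.evalFrom q (u * v).toList = M.evalFrom (M.evalFrom q u.toList) v.toList :=
  M.evalFrom_of_append q u.toList v.toList

theorem map_evalFrom_eq_leftQuotient {f : σ → Set (FreeMonoid α)}
    (hf : ∀ q a, f (M.step q a) = leftQuotient (of a) (f q)) (q : σ) (u : FreeMonoid α) :
    f (M.evalFrom q u.toList) = leftQuotient u (f q) := by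
  induction u using FreeMonoid.inductionOn' generalizing q with
  | one => simp [leftQuotient_one]
  | of_mul a u ih =>
    rw [evalFrom_toList_mul, toList_of, evalFrom_singleton, ih, hf, leftQuotient_mul]

theorem map_eq_of_map_start_eq {f g : σ → Set (FreeMonoid α)}
    (hf : ∀ q a, f (M.step q a) = leftQuotient (of a) (f q))
    (hg : ∀ q a, g (M.step q a) = leftQuotient (of a) (g q)) (hstart : f M.start = g M.start)
    (hreach : ∀ q : σ, ∃ w : FreeMonoid α, q = M.evalFrom M.start w.toList) : f = g := by
  funext q
  obtain ⟨u, rfl⟩ := hreach q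
  rw [M.map_evalFrom_eq_leftQuotient hf, M.map_evalFrom_eq_leftQuotient hg, hstart]

def acceptedWords (q : σ) : Set (FreeMonoid α) :=
  toList ⁻¹' M.acceptsFrom q

theorem acceptedWords_step (q : σ) (a : α) :
    M.acceptedWords (M.step q a) = leftQuotient (of a) (M.acceptedWords q) := by
  rfl

theorem one_mem_acceptedWords (q : σ) : 1 ∈ M.acceptedWords q ↔ q ∈ M.accept :=
  Iff.rfl

theorem acceptedWords_evalFrom (q : σ) (u : FreeMonoid α) :
    M.acceptedWords (M.evalFrom q u.toList) = leftQuotient u (M.acceptedWords q) :=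
  M.map_evalFrom_eq_leftQuotient M.acceptedWords_step q u

end DFA

open FreeMonoid

/-- universal property of the minimal automaton. Let `N_L` be the minimal
automaton of `L`: states the left quotients `u⁻¹L` of `L`, initial state `L`, transitions
`K ↦ a⁻¹K`, accepting states the quotients containing the empty word. For every
deterministic automaton `M` (states `Q`, initial state `M.start`, transitions `M.step`,
accepting set `M.accept`) which accepts `L` and is reachable, there is a unique map
`h : Q → Q_L` preserving the initial state, the transitions and acceptance; moreover
any such `h` is surjective. -/
theorem minimalAutomaton_universal {X : Type*} (L : Set (FreeMonoid X)) {Q : Type*}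
    (M : DFA X Q)
    (haccepts : ∀ w : FreeMonoid X,
      M.evalFrom M.start (FreeMonoid.toList w) ∈ M.accept ↔ w ∈ L)
    (hreach : ∀ q : Q, ∃ w : FreeMonoid X, q = M.evalFrom M.start (FreeMonoid.toList w)) :
    (∃! h : Q → {K : Set (FreeMonoid X) // ∃ u : FreeMonoid X, K = {w | u * w ∈ L}},
      (h M.start).val = L ∧
      (∀ (q : Q) (a : X),
        (h (M.step q a)).val = {w : FreeMonoid X | FreeMonoid.of a * w ∈ (h q).val}) ∧
      (∀ q : Q, q ∈ M.accept ↔ (1 : FreeMonoid X) ∈ (h q).val)) ∧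
    ∀ h : Q → {K : Set (FreeMonoid X) // ∃ u : FreeMonoid X, K = {w | u * w ∈ L}},
      ((h M.start).val = L ∧
       (∀ (q : Q) (a : X),
         (h (M.step q a)).val = {w : FreeMonoid X | FreeMonoid.of a * w ∈ (h q).val}) ∧
       (∀ q : Q, q ∈ M.accept ↔ (1 : FreeMonoid X) ∈ (h q).val)) →
      Function.Surjective h := by
  have hstart : M.acceptedWords M.start = L := Set.ext haccepts
  have hquot (q : Q) : ∃ u : FreeMonoid X, M.acceptedWords q = {w | u * w ∈ L} := by
    obtain ⟨u, rfl⟩ := hreach q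
    exact ⟨u, by rw [M.acceptedWords_evalFrom, hstart]; rfl⟩
  have hunique (h : Q → {K : Set (FreeMonoid X) // ∃ u : FreeMonoid X, K = {w | u * w ∈ L}})
      (hs : (h M.start).val = L)
      (hstep : ∀ q a, (h (M.step q a)).val = {w | of a * w ∈ (h q).val}) :
      (fun q => (h q).val) = M.acceptedWords :=
    M.map_eq_of_map_start_eq hstep M.acceptedWords_step (hs.trans hstart.symm) hreach
  refine ⟨⟨fun q => ⟨M.acceptedWords q, hquot q⟩,
    ⟨hstart, M.acceptedWords_step, fun q => (M.one_mem_acceptedWords q).symm⟩,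
    fun h ⟨hs, hstep, _⟩ => funext fun q => Subtype.ext (congrFun (hunique h hs hstep) q)⟩, ?_⟩
  rintro h ⟨hs, hstep, _⟩ ⟨K, u, rfl⟩
  refine ⟨M.evalFrom M.start u.toList, Subtype.ext ?_⟩
  rw [congrFun (hunique h hs hstep), M.acceptedWords_evalFrom, hstart]
  rfl
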